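/- arXiv:1705.04310 — 9 statements merged into one kernel-verified Lean document; each statement's English description precedes it below -/
import Mathlib

section
/- Let C be a category with an object extension structure X, and let Z be a q-morphism structure over X. Define Tm(Γ) to be the set of pairs (A, s) where A : Ty(Γ) and s : Γ → Γ.A is a section of π_A, with reindexing given by pulling back sections along the q-morphism pullback squares, p : Tm → Ty the first projection, and te_A := (A[π_A], δ_{π_A}) where δ is the diagonal of the pullback square for (π_A, A). Then this forms a term-structure over X compatible with Z. -/
open CategoryTheory Limits Opposite

universe v v' v₂ u u' u₂ u₃ u₄

/-- An object extension structure on a category `C`. -/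
structure ObjExtStructure (C : Type u) [Category.{v} C] where
  Ty : Cᵒᵖ ⥤ Type v
  ext : ∀ (Γ : C), Ty.obj (op Γ) → C
  π : ∀ (Γ : C) (A : Ty.obj (op Γ)), ext Γ A ⟶ Γ

/-- A representation of the fiber of a map of presheaves `p : Tm ⟶ Ty` over `A : Ty(Γ)`. -/
structure FiberRepresentation {C : Type u} [Category.{v} C] {Ty Tm : Cᵒᵖ ⥤ Type v}
    (p : Tm ⟶ Ty) (Γ : C) (A : Ty.obj (op Γ)) where
  ext : C
  π : ext ⟶ Γ
  te : Tm.obj (op ext)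
  te_p : p.app (op ext) te = Ty.map π.op A
  isPB : IsPullback (yonedaEquiv.symm te) (yoneda.map π) p (yonedaEquiv.symm A)

/-- A CwF structure (à la Fiore) on a category `C`. -/
structure CwFStructure (C : Type u) [Category.{v} C] where
  Ty : Cᵒᵖ ⥤ Type v
  Tm : Cᵒᵖ ⥤ Type v
  p : Tm ⟶ Ty
  rep : ∀ (Γ : C) (A : Ty.obj (op Γ)), FiberRepresentation p Γ A

/-- A (functional) term-structure over an object extension structure `X`. -/
structure TermStructure {C : Type u} [Category.{v} C] (X : ObjExtStructure C) where
  Tm : Cᵒᵖ ⥤ Type v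
  p : Tm ⟶ X.Ty
  te : ∀ (Γ : C) (A : X.Ty.obj (op Γ)), Tm.obj (op (X.ext Γ A))
  te_p : ∀ Γ A, p.app _ (te Γ A) = X.Ty.map (X.π Γ A).op A
  isPB : ∀ Γ A, IsPullback (yonedaEquiv.symm (te Γ A)) (yoneda.map (X.π Γ A)) p (yonedaEquiv.symm A)

/-- A (split) q-morphism structure over an object extension structure `X`. -/
structure qMorphismStructure {C : Type u} [Category.{v} C] (X : ObjExtStructure C) where
  q : ∀ {Γ' Γ : C} (f : Γ' ⟶ Γ) (A : X.Ty.obj (op Γ)),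
      X.ext Γ' (X.Ty.map f.op A) ⟶ X.ext Γ A
  isPB : ∀ {Γ' Γ : C} (f : Γ' ⟶ Γ) (A : X.Ty.obj (op Γ)),
      IsPullback (q f A) (X.π Γ' (X.Ty.map f.op A)) (X.π Γ A) f
  q_id : ∀ (Γ : C) (A : X.Ty.obj (op Γ)), q (𝟙 Γ) A = eqToHom (by simp)
  q_comp : ∀ {Γ'' Γ' Γ : C} (f' : Γ'' ⟶ Γ') (f : Γ' ⟶ Γ) (A : X.Ty.obj (op Γ)),
      q (f' ≫ f) A = eqToHom (by simp) ≫ q f' (X.Ty.map f.op A) ≫ q f A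

/-- Compatibility between a term-structure and a q-morphism structure. -/
def Compatible {C : Type u} [Category.{v} C] {X : ObjExtStructure C}
    (Y : TermStructure X) (Z : qMorphismStructure X) : Prop :=
  ∀ {Γ' Γ : C} (f : Γ' ⟶ Γ) (A : X.Ty.obj (op Γ)),
    Y.te Γ' (X.Ty.map f.op A) = Y.Tm.map (Z.q f A).op (Y.te Γ A)

/-- A split type-category structure on `C` (Pitts' type-categories, split version). -/
structure SplitTypeCatStructure (C : Type u) [Category.{v} C] where
  Ty : C → Type v
  isSet : ∀ (Γ : C) (A B : Ty Γ) (p q : A = B), p = q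
  ext : ∀ Γ, Ty Γ → C
  π : ∀ Γ A, ext Γ A ⟶ Γ
  reind : ∀ {Γ' Γ : C} (_ : Γ' ⟶ Γ), Ty Γ → Ty Γ'
  q : ∀ {Γ' Γ : C} (f : Γ' ⟶ Γ) (A : Ty Γ), ext Γ' (reind f A) ⟶ ext Γ A
  isPB : ∀ {Γ' Γ : C} (f : Γ' ⟶ Γ) (A : Ty Γ),
      IsPullback (q f A) (π Γ' (reind f A)) (π Γ A) f
  reind_id : ∀ (Γ : C) (A : Ty Γ), reind (𝟙 Γ) A = A
  q_id : ∀ (Γ : C) (A : Ty Γ), q (𝟙 Γ) A = eqToHom (by rw [reind_id])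
  reind_comp : ∀ {Γ'' Γ' Γ : C} (f' : Γ'' ⟶ Γ') (f : Γ' ⟶ Γ) (A : Ty Γ),
      reind (f' ≫ f) A = reind f' (reind f A)
  q_comp : ∀ {Γ'' Γ' Γ : C} (f' : Γ'' ⟶ Γ') (f : Γ' ⟶ Γ) (A : Ty Γ),
      q (f' ≫ f) A = eqToHom (by rw [reind_comp]) ≫ q f' (reind f A) ≫ q f A

/-- A `J`-pullback of `p : Ũ ⟶ U` along `f : J(X) ⟶ U`. -/
structure RelPullback {C : Type u} {D : Type u'} [Category.{v} C] [Category.{v'} D]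
    (J : C ⥤ D) {Ut U : D} (p : Ut ⟶ U) (X : C) (f : J.obj X ⟶ U) where
  obj : C
  pr : obj ⟶ X
  Q : J.obj obj ⟶ Ut
  isPB : IsPullback Q (J.map pr) p f

/-- A universe relative to a functor `J`. -/
structure RelUniverse {C : Type u} {D : Type u'} [Category.{v} C] [Category.{v'} D]
    (J : C ⥤ D) where
  Ut : D
  U : D
  p : Ut ⟶ U
  str : ∀ (X : C) (f : J.obj X ⟶ U), RelPullback J p X f

/-- A weak universe relative to a functor `J`. -/
structure WeakRelUniverse {C : Type u} {D : Type u'} [Category.{v} C] [Category.{v'} D]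
    (J : C ⥤ D) where
  Ut : D
  U : D
  p : Ut ⟶ U
  str : ∀ (X : C) (f : J.obj X ⟶ U), Nonempty (RelPullback J p X f)

/-- A category is univalent if `idtoiso` is an equivalence. -/
def IsUnivalentCat (C : Type u) [Category.{v} C] : Prop :=
  ∀ X Y : C, Function.Bijective (fun h : X = Y => eqToIso h)

/-- A representable map of presheaves on `C`. -/
structure RepMapPresheaves (C : Type u) [Category.{v} C] where
  Ty : Cᵒᵖ ⥤ Type v
  Tm : Cᵒᵖ ⥤ Type v
  p : Tm ⟶ Ty
  rep : ∀ (Γ : C) (A : Ty.obj (op Γ)), Nonempty (FiberRepresentation p Γ A)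

/-- The univalence axiom for a universe. -/
def UnivalenceAxiom : Prop :=
  ∀ α β : Type v, Function.Bijective (fun h : α = β => Equiv.cast h)

/-- The set of pairs of a type `A` over `Γ` and a section of its projection. -/
abbrev SecSet {C : Type u} [Category.{v} C] (X : ObjExtStructure C) (Γ : C) : Type v :=
  Σ A : X.Ty.obj (op Γ), {s : Γ ⟶ X.ext Γ A // s ≫ X.π Γ A = 𝟙 Γ}

/-- Reindexing of sections along `f`, via the q-morphism pullback squares. -/
noncomputable def secReind {C : Type u} [Category.{v} C] {X : ObjExtStructure C}
    (Z : qMorphismStructure X) {Γ' Γ : C} (f : Γ' ⟶ Γ) (t : SecSet X Γ) : SecSet X Γ' :=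
  ⟨X.Ty.map f.op t.1,
    ⟨(Z.isPB f t.1).lift (f ≫ t.2.1) (𝟙 Γ') (by simp [t.2.2]),
     (Z.isPB f t.1).lift_snd _ _ _⟩⟩

/-- The diagonal section of the pullback square for `π_A` and `A`. -/
noncomputable def diagSec {C : Type u} [Category.{v} C] {X : ObjExtStructure C}
    (Z : qMorphismStructure X) (Γ : C) (A : X.Ty.obj (op Γ)) :
    {s : X.ext Γ A ⟶ X.ext (X.ext Γ A) (X.Ty.map (X.π Γ A).op A) //
      s ≫ X.π (X.ext Γ A) (X.Ty.map (X.π Γ A).op A) = 𝟙 (X.ext Γ A)} :=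
  ⟨(Z.isPB (X.π Γ A) A).lift (𝟙 _) (𝟙 _) (by simp),
   (Z.isPB (X.π Γ A) A).lift_snd _ _ _⟩

/-!
By the pullback square of `q(f, A)`, a section of `π_{A[f]}` is the same as a lift of `f`
along `π_A`. Hence reindexing the diagonal section `δ_A` along `g : Δ ⟶ Γ.A` gives the section
of `π_{A[g ≫ π_A]}` that `q(g ≫ π_A, A)` maps to `g`. This one description yields both the
existence and the uniqueness half of the pullback property of `te_A`, and, since
`q(f, A) ≫ π_A = π_{A[f]} ≫ f` and `q` is split, the compatibility `te_{A[f]} = te_A[q(f, A)]`.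
-/

@[simp]
lemma ObjExtStructure.eqToHom_π {C : Type u} [Category.{v} C] (X : ObjExtStructure C) {Γ : C}
    {B B' : X.Ty.obj (op Γ)} (h : B = B') :
    eqToHom (congrArg (X.ext Γ) h) ≫ X.π Γ B' = X.π Γ B := by
  subst h; simp

namespace qMorphismStructure

variable {C : Type u} [Category.{v} C] {X : ObjExtStructure C} (Z : qMorphismStructure X)

lemma secReind_eq_iff {Γ' Γ : C} (f : Γ' ⟶ Γ) (t : SecSet X Γ) (u : SecSet X Γ') :
    secReind Z f t = u ↔ ∃ h : u.1 = X.Ty.map f.op t.1,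
      u.2.1 ≫ eqToHom (congrArg (X.ext Γ') h) ≫ Z.q f t.1 = f ≫ t.2.1 := by
  constructor
  · rintro rfl
    refine ⟨rfl, ?_⟩
    change _ ≫ 𝟙 (X.ext Γ' (X.Ty.map f.op t.1)) ≫ _ = _
    rw [Category.id_comp]
    exact (Z.isPB f t.1).lift_fst _ _ _
  · obtain ⟨B, s, hs⟩ := u
    rintro ⟨h, hq⟩
    dsimp only at h hq
    subst h
    simp only [eqToHom_refl, Category.id_comp] at hq
    refine Sigma.ext rfl (heq_of_eq (Subtype.ext ?_))
    exact (Z.isPB f t.1).hom_ext (by simp [secReind, hq]) (by simp [secReind, hs])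

lemma secReind_id {Γ : C} (t : SecSet X Γ) : secReind Z (𝟙 Γ) t = t :=
  (secReind_eq_iff Z _ t t).2 ⟨by simp, by simp [Z.q_id]⟩

lemma secReind_comp {Γ'' Γ' Γ : C} (f' : Γ'' ⟶ Γ') (f : Γ' ⟶ Γ) (t : SecSet X Γ) :
    secReind Z f' (secReind Z f t) = secReind Z (f' ≫ f) t := by
  refine (secReind_eq_iff Z f' _ _).2 ⟨by simp [secReind], (Z.isPB f t.1).hom_ext ?_ ?_⟩
  · simp [secReind, Z.q_comp f' f]
  · simp [secReind, (Z.isPB f' _).w, reassoc_of% X.eqToHom_π]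

noncomputable abbrev genericSec (Γ : C) (A : X.Ty.obj (op Γ)) : SecSet X (X.ext Γ A) :=
  ⟨X.Ty.map (X.π Γ A).op A, diagSec Z Γ A⟩

@[simp]
lemma diagSec_q (Γ : C) (A : X.Ty.obj (op Γ)) :
    (diagSec Z Γ A).1 ≫ Z.q (X.π Γ A) A = 𝟙 _ :=
  (Z.isPB _ _).lift_fst _ _ _

lemma diagSec_π (Γ : C) (A : X.Ty.obj (op Γ)) :
    (diagSec Z Γ A).1 ≫ X.π _ (X.Ty.map (X.π Γ A).op A) = 𝟙 _ :=
  (diagSec Z Γ A).2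

lemma secReind_genericSec_eq_iff {Δ Γ : C} {A : X.Ty.obj (op Γ)} (g : Δ ⟶ X.ext Γ A)
    {y : Δ ⟶ Γ} (hy : g ≫ X.π Γ A = y) (u : SecSet X Δ) :
    secReind Z g (genericSec Z Γ A) = u ↔ ∃ h : u.1 = X.Ty.map y.op A,
      u.2.1 ≫ eqToHom (congrArg (X.ext Δ) h) ≫ Z.q y A = g := by
  subst hy
  rw [secReind_eq_iff]
  obtain ⟨B, s, hs⟩ := u
  have hB : X.Ty.map g.op (X.Ty.map (X.π Γ A).op A) = X.Ty.map (g ≫ X.π Γ A).op A := by simp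
  constructor
  · rintro ⟨h, hq⟩
    dsimp only at h hq
    subst h
    simp only [eqToHom_refl, Category.id_comp] at hq
    exact ⟨hB, by simp [Z.q_comp, reassoc_of% hq]⟩
  · rintro ⟨h, hq⟩
    dsimp only at h hq
    subst h
    refine ⟨hB.symm, (Z.isPB (X.π Γ A) A).hom_ext ?_ ?_⟩
    · simpa [Z.q_comp] using hq
    · simp only [Category.assoc, (Z.isPB g _).w, diagSec_π, Category.comp_id]
      rw [reassoc_of% (X.eqToHom_π hB.symm), reassoc_of% hs]

lemma secReind_q_genericSec {Γ' Γ : C} (f : Γ' ⟶ Γ) (A : X.Ty.obj (op Γ)) :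
    secReind Z (Z.q f A) (genericSec Z Γ A) = genericSec Z Γ' (X.Ty.map f.op A) :=
  (secReind_genericSec_eq_iff Z (Z.q f A) (Z.isPB f A).w _).2
    ⟨by simp, by simp [Z.q_comp, reassoc_of% diagSec_q]⟩

noncomputable def secPresheaf : Cᵒᵖ ⥤ Type v where
  obj Γ := SecSet X (unop Γ)
  map f := TypeCat.ofHom (secReind Z f.unop)
  map_id _ := ConcreteCategory.hom_ext _ _ (secReind_id Z)
  map_comp f g := ConcreteCategory.hom_ext _ _ fun t => (secReind_comp Z g.unop f.unop t).symm

def secPresheafFst : secPresheaf Z ⟶ X.Ty where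
  app _ := TypeCat.ofHom Sigma.fst

lemma isPullback_genericSec (Γ : C) (A : X.Ty.obj (op Γ)) :
    IsPullback (yonedaEquiv.symm (genericSec Z Γ A)) (yoneda.map (X.π Γ A)) (secPresheafFst Z)
      (yonedaEquiv.symm A) := by
  refine IsPullback.of_forall_isPullback_app fun Δ => (Types.isPullback_iff _ _ _ _).2 ⟨?_, ?_, ?_⟩
  · ext g
    exact (X.Ty.map_comp_apply (X.π Γ A).op g.op A).symm
  · rintro g g' ⟨hte, hπ⟩
    obtain ⟨_, hg⟩ := (secReind_genericSec_eq_iff Z g rfl _).1 rfl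
    obtain ⟨_, hg'⟩ := (secReind_genericSec_eq_iff Z g' hπ.symm _).1 hte.symm
    exact hg.symm.trans hg'
  · intro x y (hxy : x.1 = X.Ty.map y.op A)
    have hy : (x.2.1 ≫ eqToHom (congrArg _ hxy) ≫ Z.q y A) ≫ X.π Γ A = y := by
      rw [Category.assoc, Category.assoc, (Z.isPB y A).w, reassoc_of% (X.eqToHom_π hxy),
        reassoc_of% x.2.2]
    exact ⟨_, (secReind_genericSec_eq_iff Z _ hy x).2 ⟨hxy, rfl⟩, hy⟩

noncomputable def secTermStructure : TermStructure X where
  Tm := secPresheaf Z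
  p := secPresheafFst Z
  te := genericSec Z
  te_p _ _ := rfl
  isPB := isPullback_genericSec Z

lemma secTermStructure_compatible : Compatible (secTermStructure Z) Z :=
  fun f A => (secReind_q_genericSec Z f A).symm

end qMorphismStructure

theorem stmt3 (C : Type u) [Category.{v} C] (X : ObjExtStructure C)
    (Z : qMorphismStructure X) :
    ∃ Y : TermStructure X, Compatible Y Z ∧
      ∃ e : ∀ Γ : C, Y.Tm.obj (op Γ) ≃ SecSet X Γ,
        (∀ {Γ' Γ : C} (f : Γ' ⟶ Γ) (t : Y.Tm.obj (op Γ)),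
            e Γ' (Y.Tm.map f.op t) = secReind Z f (e Γ t)) ∧
        (∀ (Γ : C) (t : Y.Tm.obj (op Γ)), Y.p.app (op Γ) t = (e Γ t).1) ∧
        (∀ (Γ : C) (A : X.Ty.obj (op Γ)),
            e (X.ext Γ A) (Y.te Γ A) = ⟨X.Ty.map (X.π Γ A).op A, diagSec Z Γ A⟩) :=
  ⟨Z.secTermStructure, Z.secTermStructure_compatible, fun _ => Equiv.refl _,
    fun _ _ => rfl, fun _ _ => rfl, fun _ _ => rfl⟩
end

section
/- Let J : C → D be a fully faithful functor with C a univalent category. Then for any morphism p : Ũ → U in D, any object X : C, and any f : J(X) → U, the type of J-pullbacks of p along f is a proposition. -/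
open CategoryTheory Limits Opposite

universe v v' v₂ u u' u₂ u₃ u₄

theorem stmt6 {C : Type u} {D : Type u'} [Category.{v} C] [Category.{v'} D]
    (J : C ⥤ D) [J.Full] [J.Faithful] (hC : IsUnivalentCat C)
    {Ut U : D} (p : Ut ⟶ U) (X : C) (f : J.obj X ⟶ U) :
    Subsingleton (RelPullback J p X f) := by
  constructor
  intro a b
  obtain ⟨Xa, pra, Qa, pba⟩ := a
  obtain ⟨Xb, prb, Qb, pbb⟩ := b
  let e : J.obj Xa ≅ J.obj Xb := pba.isoIsPullback _ _ pbb
  have hfst : e.hom ≫ Qb = Qa := pba.isoIsPullback_hom_fst _ _ pbb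
  have hsnd : e.hom ≫ J.map prb = J.map pra := pba.isoIsPullback_hom_snd _ _ pbb
  obtain ⟨h, hh⟩ := (hC Xa Xb).2 (J.preimageIso e)
  have hh' : eqToIso h = J.preimageIso e := hh
  have hmap : J.map (eqToHom h) = e.hom := by
    have : J.map (eqToIso h).hom = J.map (J.preimageIso e).hom := by rw [hh']
    simpa using this
  subst h
  simp only [eqToHom_refl, Functor.map_id] at hmap
  have hpr : pra = prb := J.map_injective (by rw [← hsnd, ← hmap]; simp)
  have hQ : Qa = Qb := by rw [← hfst, ← hmap]; simp
  subst hpr; subst hQ; rfl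
end

section
/- Suppose given functors J : C → D, J' : C' → D', R : C → C', S : D → D', and a natural isomorphism α : J ∘ S ≅ R ∘ J', such that S preserves pullbacks, S is split full (equipped with a section of its action on morphisms), and R is split essentially surjective (equipped with, for each X' : C', an object X and an iso R(X) ≅ X'). Then from any J-universe structure on a morphism p : Ũ → U of D one can construct a J'-universe structure on S(p). -/
open CategoryTheory Limits Opposite

universe v v' v₂ u u' u₂ u₃ u₄

theorem stmt8 {C : Type u} {D : Type u'} {C' : Type u₂} {D' : Type u₃}
    [Category.{v} C] [Category.{v'} D] [Category.{v₂} C'] [Category.{v'} D']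
    (J : C ⥤ D) (J' : C' ⥤ D') (R : C ⥤ C') (S : D ⥤ D')
    (α : J ⋙ S ≅ R ⋙ J')
    (hS : ∀ {P X Y Z : D} (fst : P ⟶ X) (snd : P ⟶ Y) (f : X ⟶ Z) (g : Y ⟶ Z),
      IsPullback fst snd f g → IsPullback (S.map fst) (S.map snd) (S.map f) (S.map g))
    (splitFull : ∀ {X Y : D} (g : S.obj X ⟶ S.obj Y), {f : X ⟶ Y // S.map f = g})
    (splitEssSurj : ∀ X' : C', Σ X : C, R.obj X ≅ X')
    {Ut U : D} (p : Ut ⟶ U)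
    (us : ∀ (X : C) (f : J.obj X ⟶ U), RelPullback J p X f) :
    Nonempty (∀ (X' : C') (f' : J'.obj X' ⟶ S.obj U), RelPullback J' (S.map p) X' f') := by
  constructor
  intro X' f'
  obtain ⟨X, e⟩ := splitEssSurj X'
  obtain ⟨f, hf⟩ := splitFull (α.hom.app X ≫ J'.map e.hom ≫ f')
  obtain ⟨Y, pr, Q, isPB⟩ := us X f
  refine ⟨R.obj Y, R.map pr ≫ e.hom, α.inv.app Y ≫ S.map Q, ?_⟩
  have h := hS _ _ _ _ isPB
  refine h.of_iso (α.app Y) (Iso.refl _) (α.app X ≪≫ J'.mapIso e) (Iso.refl _) ?_ ?_ ?_ ?_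
  · simp
  · have := α.hom.naturality pr
    simp only [Functor.comp_map] at this
    simp [reassoc_of% this]
  · simp
  · simp [hf]
end

section
/- Suppose given functors J : C → D, J' : C' → D', R : C → C', S : D → D', and a natural isomorphism α : J ∘ S ≅ R ∘ J', such that S preserves pullbacks, S is full, R is essentially surjective, C' is a univalent category, and J' is fully faithful. Then from any J-universe structure on a morphism p of D one can construct a J'-universe structure on S(p). -/
open CategoryTheory Limits Opposite

universe v v' v₂ u u' u₂ u₃ u₄

theorem stmt9 {C : Type u} {D : Type u'} {C' : Type u₂} {D' : Type u₃}
    [Category.{v} C] [Category.{v'} D] [Category.{v₂} C'] [Category.{v'} D']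
    (J : C ⥤ D) (J' : C' ⥤ D') (R : C ⥤ C') (S : D ⥤ D')
    (α : J ⋙ S ≅ R ⋙ J')
    (hS : ∀ {P X Y Z : D} (fst : P ⟶ X) (snd : P ⟶ Y) (f : X ⟶ Z) (g : Y ⟶ Z),
      IsPullback fst snd f g → IsPullback (S.map fst) (S.map snd) (S.map f) (S.map g))
    [S.Full] [R.EssSurj] (hC' : IsUnivalentCat C') [J'.Full] [J'.Faithful]
    {Ut U : D} (p : Ut ⟶ U)
    (us : ∀ (X : C) (f : J.obj X ⟶ U), RelPullback J p X f) :
    Nonempty (∀ (X' : C') (f' : J'.obj X' ⟶ S.obj U), RelPullback J' (S.map p) X' f') := by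

  refine ⟨fun X' f' => ?_⟩
  set X := R.objPreimage X' with hX
  set e : R.obj X ≅ X' := R.objObjPreimageIso X' with he
  set g : J.obj X ⟶ U := S.preimage (α.hom.app X ≫ J'.map e.hom ≫ f') with hgdef
  have hg : S.map g = α.hom.app X ≫ J'.map e.hom ≫ f' := S.map_preimage _
  obtain ⟨Pb, pr, Q, isPB⟩ := us X g
  have h := hS _ _ _ _ isPB
  refine ⟨R.obj Pb, R.map pr ≫ e.hom, α.inv.app Pb ≫ S.map Q, ?_⟩
  refine h.of_iso (α.app Pb) (Iso.refl _) (α.app X ≪≫ J'.mapIso e) (Iso.refl _) ?_ ?_ ?_ ?_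
  · simp
  · simp [reassoc_of% (α.hom.naturality pr)]
  · simp
  · simp [hg]
end

section
/- Suppose given functors J : C → D, J' : C' → D', R : C → C', S : D → D' with a natural isomorphism J ∘ S ≅ R ∘ J', such that S preserves pullbacks, S is full, and R is essentially surjective. If p : Ũ → U is a weak J-relative universe, then S(p) is a weak J'-relative universe. -/
open CategoryTheory Limits Opposite

universe v v' v₂ u u' u₂ u₃ u₄

theorem stmt10 {C : Type u} {D : Type u'} {C' : Type u₂} {D' : Type u₃}
    [Category.{v} C] [Category.{v'} D] [Category.{v₂} C'] [Category.{v'} D']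
    (J : C ⥤ D) (J' : C' ⥤ D') (R : C ⥤ C') (S : D ⥤ D')
    (α : J ⋙ S ≅ R ⋙ J')
    (hS : ∀ {P X Y Z : D} (fst : P ⟶ X) (snd : P ⟶ Y) (f : X ⟶ Z) (g : Y ⟶ Z),
      IsPullback fst snd f g → IsPullback (S.map fst) (S.map snd) (S.map f) (S.map g))
    [S.Full] [R.EssSurj]
    {Ut U : D} (p : Ut ⟶ U)
    (hp : ∀ (X : C) (f : J.obj X ⟶ U), Nonempty (RelPullback J p X f)) :
    ∀ (X' : C') (f' : J'.obj X' ⟶ S.obj U), Nonempty (RelPullback J' (S.map p) X' f') := by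
  intro X' f'
  obtain ⟨X, ⟨e⟩⟩ := Functor.EssSurj.mem_essImage (F := R) X'
  obtain ⟨f, hf⟩ := S.map_surjective (α.hom.app X ≫ J'.map e.hom ≫ f')
  obtain ⟨pb⟩ := hp X f
  refine ⟨⟨R.obj pb.obj, R.map pb.pr ≫ e.hom, α.inv.app pb.obj ≫ S.map pb.Q, ?_⟩⟩
  have h := hS _ _ _ _ pb.isPB
  exact h.of_iso (α.app pb.obj) (Iso.refl _) (α.app X ≪≫ J'.mapIso e) (Iso.refl _)
    (by simp) (by simpa using (α.hom.naturality pb.pr) =≫ J'.map e.hom)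
    (by simp) (by simp [hf])
end

section
/- Suppose given functors J : C → D, J' : C' → D', R : C → C', S : D → D' with a natural isomorphism J ∘ S ≅ R ∘ J', such that S preserves pullbacks, S is full and faithful, and R is full and essentially surjective. Then a morphism p : Ũ → U in D is a weak J-relative universe if and only if S(p) is a weak J'-relative universe. -/
open CategoryTheory Limits Opposite

universe v v' v₂ u u' u₂ u₃ u₄

/-!
Applying `S` to a `J`-pullback square gives a pullback square (as `S` preserves pullbacks), and
`α` identifies its left column with a `J'`-image, so it is a `J'`-pullback of `S p` along a map out
of `J'(R X)`; every `J'(X') ⟶ S U` is of this form up to iso, since `R` is essentially surjective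
and `S` is full. Conversely, the apex of a `J'`-pullback of `S p` along such a map is `R Y` up to
iso, fullness of `R` and `S` lifts its two legs, and the lifted square is a pullback because the
fully faithful `S` reflects pullbacks.
-/

namespace RelPullback

variable {C : Type u} {D : Type u'} [Category.{v} C] [Category.{v'} D] {J : C ⥤ D}
  {Ut U : D} {p : Ut ⟶ U}

def ofIsoBase {X X' : C} (e : X ≅ X') {f : J.obj X' ⟶ U}
    (P : RelPullback J p X (J.map e.hom ≫ f)) : RelPullback J p X' f where
  obj := P.obj
  pr := P.pr ≫ e.hom
  Q := P.Q
  isPB := P.isPB.of_iso (Iso.refl _) (Iso.refl _) (J.mapIso e) (Iso.refl _)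
    (by simp) (by simp) (by simp) (by simp)

end RelPullback

section Transfer

variable {C : Type u} {D : Type u'} {C' : Type u₂} {D' : Type u₃}
  [Category.{v} C] [Category.{v'} D] [Category.{v₂} C'] [Category.{v'} D']
  {J : C ⥤ D} {J' : C' ⥤ D'} {R : C ⥤ C'} {S : D ⥤ D'} (α : J ⋙ S ≅ R ⋙ J')
  {Ut U : D} {p : Ut ⟶ U}

def RelPullback.map
    (hS : ∀ {P X Y Z : D} (fst : P ⟶ X) (snd : P ⟶ Y) (f : X ⟶ Z) (g : Y ⟶ Z),
      IsPullback fst snd f g → IsPullback (S.map fst) (S.map snd) (S.map f) (S.map g))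
    {X : C} {f : J.obj X ⟶ U} (P : RelPullback J p X f) :
    RelPullback J' (S.map p) (R.obj X) (α.inv.app X ≫ S.map f) where
  obj := R.obj P.obj
  pr := R.map P.pr
  Q := α.inv.app P.obj ≫ S.map P.Q
  isPB := (hS _ _ _ _ P.isPB).of_iso (α.app P.obj) (Iso.refl _) (α.app X) (Iso.refl _)
    (by simp) (by simpa using α.hom.naturality P.pr) (by simp) (by simp)

variable [S.Full] [S.Faithful] [R.Full] [R.EssSurj]

noncomputable def RelPullback.ofMap {X : C} {f : J.obj X ⟶ U}
    (P : RelPullback J' (S.map p) (R.obj X) (α.inv.app X ≫ S.map f)) : RelPullback J p X f :=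
  let Y := R.objPreimage P.obj
  let e : R.obj Y ≅ P.obj := R.objObjPreimageIso P.obj
  let pr : Y ⟶ X := R.preimage (e.hom ≫ P.pr)
  { obj := Y
    pr := pr
    Q := S.preimage (α.hom.app Y ≫ J'.map e.hom ≫ P.Q)
    isPB := IsPullback.of_map_of_faithful S <|
      P.isPB.of_iso ((α.app Y ≪≫ J'.mapIso e).symm) (Iso.refl _) (α.app X).symm (Iso.refl _)
        (by simp) (by simp [pr]; rw [← Functor.comp_map J S, ← α.inv.naturality]; simp) (by simp) (by simp) }

end Transfer

theorem stmt11 {C : Type u} {D : Type u'} {C' : Type u₂} {D' : Type u₃}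
    [Category.{v} C] [Category.{v'} D] [Category.{v₂} C'] [Category.{v'} D']
    (J : C ⥤ D) (J' : C' ⥤ D') (R : C ⥤ C') (S : D ⥤ D')
    (α : J ⋙ S ≅ R ⋙ J')
    (hS : ∀ {P X Y Z : D} (fst : P ⟶ X) (snd : P ⟶ Y) (f : X ⟶ Z) (g : Y ⟶ Z),
      IsPullback fst snd f g → IsPullback (S.map fst) (S.map snd) (S.map f) (S.map g))
    [S.Full] [S.Faithful] [R.Full] [R.EssSurj]
    {Ut U : D} (p : Ut ⟶ U) :
    (∀ (X : C) (f : J.obj X ⟶ U), Nonempty (RelPullback J p X f)) ↔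
    (∀ (X' : C') (f' : J'.obj X' ⟶ S.obj U), Nonempty (RelPullback J' (S.map p) X' f')) := by
  constructor
  · intro h X' f'
    let e := R.objObjPreimageIso X'
    obtain ⟨P⟩ := h _ (S.preimage (α.hom.app _ ≫ J'.map e.hom ≫ f'))
    exact ⟨.ofIsoBase e (by simpa using P.map α hS)⟩
  · intro h X f
    obtain ⟨P⟩ := h (R.obj X) (α.inv.app X ≫ S.map f)
    exact ⟨P.ofMap α⟩
end

section
/- Suppose given functors J : C → D, J' : C' → D', R : C → C', S : D → D' with a natural isomorphism J ∘ S ≅ R ∘ J', such that D and D' are univalent categories, S is an equivalence of categories, and R is full and essentially surjective. Then the type of weak J-relative universes is equivalent to the type of weak J'-relative universes. -/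
open CategoryTheory Limits Opposite

universe v v' v₂ u u' u₂ u₃ u₄

section Aux

variable {C : Type u} {D : Type u'} {C' : Type u₂} {D' : Type u₃}
    [Category.{v} C] [Category.{v'} D] [Category.{v₂} C'] [Category.{v'} D']
    (J : C ⥤ D) (J' : C' ⥤ D') (R : C ⥤ C') (S : D ⥤ D')

theorem aux_fwd (α : J ⋙ S ≅ R ⋙ J') [S.IsEquivalence] [R.EssSurj] {Ut U : D} (p : Ut ⟶ U)
    (h : ∀ (X : C) (f : J.obj X ⟶ U), Nonempty (RelPullback J p X f)) :
    ∀ (X' : C') (f' : J'.obj X' ⟶ S.obj U), Nonempty (RelPullback J' (S.map p) X' f') := by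
  intro X' f'
  set X := R.objPreimage X' with hX
  set i : R.obj X ≅ X' := R.objObjPreimageIso X'
  set f₀ : J.obj X ⟶ U := S.preimage ((α.app X).hom ≫ J'.map i.hom ≫ f') with hf₀
  obtain ⟨PB⟩ := h X f₀
  have sq := PB.isPB.map S
  have sq' : IsPullback ((α.app PB.obj).inv ≫ S.map PB.Q)
      (J'.map (R.map PB.pr ≫ i.hom)) (S.map p) f' := by
    refine sq.of_iso (α.app PB.obj) (Iso.refl _) (α.app X ≪≫ J'.mapIso i) (Iso.refl _)
      ?_ ?_ ?_ ?_
    · simp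
    · have := α.hom.naturality PB.pr
      simp only [Functor.comp_obj, Functor.comp_map] at this
      simp only [Iso.trans_hom, Functor.mapIso_hom, Functor.map_comp, Iso.app_hom]
      rw [← Category.assoc, this, Category.assoc]
    · simp
    · simp [hf₀]
  exact ⟨⟨R.obj PB.obj, R.map PB.pr ≫ i.hom, (α.app PB.obj).inv ≫ S.map PB.Q, sq'⟩⟩

theorem aux_bwd (α : J ⋙ S ≅ R ⋙ J') [S.IsEquivalence] [R.Full] [R.EssSurj] {Ut U : D} (p : Ut ⟶ U)
    (h : ∀ (X' : C') (f' : J'.obj X' ⟶ S.obj U), Nonempty (RelPullback J' (S.map p) X' f')) :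
    ∀ (X : C) (f : J.obj X ⟶ U), Nonempty (RelPullback J p X f) := by
  intro X f
  obtain ⟨PB⟩ := h (R.obj X) ((α.app X).inv ≫ S.map f)
  set P := R.objPreimage PB.obj with hP
  set j : R.obj P ≅ PB.obj := R.objObjPreimageIso PB.obj
  set pr : P ⟶ X := R.preimage (j.hom ≫ PB.pr) with hpr
  set Q : J.obj P ⟶ Ut := S.preimage ((α.app P).hom ≫ J'.map j.hom ≫ PB.Q) with hQ
  have sq : IsPullback (S.map Q) (S.map (J.map pr)) (S.map p) (S.map f) := by
    refine PB.isPB.of_iso ((α.app P ≪≫ J'.mapIso j).symm) (Iso.refl _)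
      ((α.app X).symm) (Iso.refl _) ?_ ?_ ?_ ?_
    · simp [hQ]
    · have := α.hom.naturality pr
      simp only [Functor.comp_obj, Functor.comp_map] at this
      have hR : R.map pr = j.hom ≫ PB.pr := R.map_preimage _
      have hnat := α.inv.naturality pr
      simp only [Functor.comp_obj, Functor.comp_map] at hnat
      simp only [Iso.symm_hom, Iso.trans_inv, Functor.mapIso_inv, Iso.app_inv, Category.assoc]
      rw [← hnat, hR]
      simp
    · simp
    · simp
  exact ⟨⟨P, pr, Q, sq.of_map_of_faithful S⟩⟩

theorem aux_obj_inj [S.IsEquivalence] (hD : IsUnivalentCat D) (hD' : IsUnivalentCat D') :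
    Function.Injective S.obj := by
  intro X Y h
  obtain ⟨e, -⟩ := (hD X Y).2 (S.preimageIso (eqToIso h))
  exact e

end Aux

theorem stmt12 {C : Type u} {D : Type u'} {C' : Type u₂} {D' : Type u₃}
    [Category.{v} C] [Category.{v'} D] [Category.{v₂} C'] [Category.{v'} D']
    (J : C ⥤ D) (J' : C' ⥤ D') (R : C ⥤ C') (S : D ⥤ D')
    (α : J ⋙ S ≅ R ⋙ J')
    (hD : IsUnivalentCat D) (hD' : IsUnivalentCat D')
    [S.IsEquivalence] [R.Full] [R.EssSurj] :
    Nonempty (WeakRelUniverse J ≃ WeakRelUniverse J') := by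
  classical
  have inj : Function.Injective S.obj := aux_obj_inj S hD hD'
  refine ⟨Equiv.ofBijective
    (fun u => ⟨S.obj u.Ut, S.obj u.U, S.map u.p, aux_fwd J J' R S α u.p u.str⟩) ⟨?_, ?_⟩⟩
  · rintro ⟨Ut₁, U₁, p₁, str₁⟩ ⟨Ut₂, U₂, p₂, str₂⟩ h
    have h1 := congrArg WeakRelUniverse.Ut h
    have h2 := congrArg WeakRelUniverse.U h
    have h3 := congr_arg_heq WeakRelUniverse.p h
    simp only at h1 h2 h3
    obtain rfl := inj h1
    obtain rfl := inj h2
    obtain rfl : p₁ = p₂ := S.map_injective (eq_of_heq h3)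
    rfl
  · rintro ⟨Ut', U', p', str'⟩
    obtain ⟨hUt, -⟩ := (hD' (S.obj (S.objPreimage Ut')) Ut').2 (S.objObjPreimageIso Ut')
    obtain ⟨hU, -⟩ := (hD' (S.obj (S.objPreimage U')) U').2 (S.objObjPreimageIso U')
    obtain ⟨Ut, rfl⟩ : ∃ Y, S.obj Y = Ut' := ⟨_, hUt⟩
    obtain ⟨U, rfl⟩ : ∃ Y, S.obj Y = U' := ⟨_, hU⟩
    have hmap : S.map (S.preimage p') = p' := S.map_preimage p'
    refine ⟨⟨Ut, U, S.preimage p', ?_⟩, ?_⟩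
    · exact aux_bwd J J' R S α _ (by rw [hmap]; exact str')
    · show WeakRelUniverse.mk _ _ (S.map (S.preimage p')) _ = ⟨_, _, p', str'⟩
      congr 1
end

section
/- If C is a univalent category, then the forgetful map from CwF structures on C to representable maps of presheaves on C is an equivalence of types; i.e., any representable map of presheaves on a univalent category carries a unique choice of representing data. -/
open CategoryTheory Limits Opposite

universe v v' v₂ u u' u₂ u₃ u₄

lemma fiberRep_unique {C : Type u} [Category.{v} C] (hC : IsUnivalentCat C)
    {Ty Tm : Cᵒᵖ ⥤ Type v} (p : Tm ⟶ Ty) (Γ : C) (A : Ty.obj (op Γ))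
    (r₁ r₂ : FiberRepresentation p Γ A) : r₁ = r₂ := by
  obtain ⟨E₁, π₁, t₁, tp₁, pb₁⟩ := r₁
  obtain ⟨E₂, π₂, t₂, tp₂, pb₂⟩ := r₂
  let e : yoneda.obj E₁ ≅ yoneda.obj E₂ := pb₁.isoIsPullback _ _ pb₂
  let i : E₁ ≅ E₂ := yoneda.preimageIso e
  have hy : yoneda.map i.hom = e.hom := yoneda.map_preimage e.hom
  obtain ⟨h, hh⟩ := (hC E₁ E₂).2 i
  subst h
  have hi : i.hom = 𝟙 E₁ := by rw [← hh]; rfl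
  have he : e.hom = 𝟙 (yoneda.obj E₁) := by rw [← hy, hi, yoneda.map_id]
  have hfst : e.hom ≫ yonedaEquiv.symm t₂ = yonedaEquiv.symm t₁ :=
    pb₁.isoIsPullback_hom_fst _ _ pb₂
  have hsnd : e.hom ≫ yoneda.map π₂ = yoneda.map π₁ :=
    pb₁.isoIsPullback_hom_snd _ _ pb₂
  rw [he, Category.id_comp] at hfst hsnd
  have hπ : π₂ = π₁ := yoneda.map_injective hsnd
  have ht : t₂ = t₁ := yonedaEquiv.symm.injective hfst
  subst hπ; subst ht
  rfl

theorem stmt13 (C : Type u) [Category.{v} C] (hC : IsUnivalentCat C) :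
    Function.Bijective (fun w : CwFStructure C =>
      ({ Ty := w.Ty, Tm := w.Tm, p := w.p,
         rep := fun Γ A => ⟨w.rep Γ A⟩ } : RepMapPresheaves C)) := by
  constructor
  · intro w₁ w₂ h
    obtain ⟨Ty₁, Tm₁, p₁, rep₁⟩ := w₁
    obtain ⟨Ty₂, Tm₂, p₂, rep₂⟩ := w₂
    simp only [RepMapPresheaves.mk.injEq] at h
    obtain ⟨h1, h2, h3⟩ := h
    subst h1; subst h2
    have h3' : p₁ = p₂ := eq_of_heq h3
    subst h3'
    simp only [CwFStructure.mk.injEq, heq_eq_eq, true_and]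
    funext Γ A
    exact fiberRep_unique hC _ Γ A _ _
  · intro R
    obtain ⟨Ty, Tm, p, rep⟩ := R
    exact ⟨⟨Ty, Tm, p, fun Γ A => (rep Γ A).some⟩, rfl⟩
end

section
/- For any category C, the type of CwF structures on C is equivalent to the type of universes relative to the Yoneda embedding y : C → PSh(C). -/
open CategoryTheory Limits Opposite

universe v v' v₂ u u' u₂ u₃ u₄

/-- Fiber representations correspond to relative pullbacks along the Yoneda embedding. -/
def fiberEquivRelPB {C : Type u} [Category.{v} C] {Ty Tm : Cᵒᵖ ⥤ Type v}
    (p : Tm ⟶ Ty) (Γ : C) (A : Ty.obj (op Γ)) :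
    FiberRepresentation p Γ A ≃ RelPullback (yoneda (C := C)) p Γ (yonedaEquiv.symm A) where
  toFun r := ⟨r.ext, r.π, yonedaEquiv.symm r.te, r.isPB⟩
  invFun r :=
    { ext := r.obj
      π := r.pr
      te := yonedaEquiv r.Q
      te_p := by
        have h := r.isPB.w
        have := congrArg yonedaEquiv h
        rw [yonedaEquiv_comp, ← yonedaEquiv_naturality, Equiv.apply_symm_apply] at this
        exact this
      isPB := by simpa using r.isPB }
  left_inv r := by cases r; simp
  right_inv r := by cases r; simp

/-- Transport the family of relative pullbacks along the Yoneda lemma. -/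
def repEquivStr {C : Type u} [Category.{v} C] {Ty Tm : Cᵒᵖ ⥤ Type v}
    (p : Tm ⟶ Ty) (Γ : C) :
    (∀ A : Ty.obj (op Γ), FiberRepresentation p Γ A) ≃
      (∀ f : yoneda.obj Γ ⟶ Ty, RelPullback (yoneda (C := C)) p Γ f) :=
  (Equiv.piCongrRight fun A => fiberEquivRelPB p Γ A).trans
    (Equiv.piCongrLeft' (fun f => RelPullback (yoneda (C := C)) p Γ f) yonedaEquiv).symm

theorem stmt14 (C : Type u) [Category.{v} C] :
    Nonempty (CwFStructure C ≃ RelUniverse (yoneda (C := C))) := by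
  refine ⟨{
    toFun := fun S => ⟨S.Tm, S.Ty, S.p, fun Γ => repEquivStr S.p Γ (S.rep Γ)⟩
    invFun := fun R => ⟨R.U, R.Ut, R.p, fun Γ => (repEquivStr R.p Γ).symm (R.str Γ)⟩
    left_inv := fun S => by
      cases S
      simp only [Equiv.symm_apply_apply]
    right_inv := fun R => by
      cases R
      simp only [Equiv.apply_symm_apply] }⟩
end
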